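/- arXiv:1309.4517 — 5 statements merged into one kernel-verified Lean document; each statement's English description precedes it below -/
import Mathlib

section
/- Let 𝔄 be an abelian category and let 𝔄^Π be the category of functors from the poset Π = {(a,b) ∈ ℤ² : a ≤ b} (with (a,b) ≤ (a',b') iff a ≥ a', b ≥ b') to 𝔄. Then the full subcategory 𝔄^Π_a of admissible objects — those E^{•,•} such that for all a ≤ b ≤ c the sequence 0 → E^{b,c} → E^{a,c} → E^{a,b} → 0 is short exact — is closed under extensions in 𝔄^Π: if 0 → E' → E → E'' → 0 is a short exact sequence in 𝔄^Π (i.e., pointwise short exact) with E' and E'' admissible, then E is admissible. -/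
/-! `E^{b,b}` is an extension of `E'^{b,b} = 0` by `E''^{b,b} = 0`, hence zero, so the composite
`E^{b,c} → E^{a,c} → E^{a,b}`, which factors through it, vanishes. The three sequences for
`E'`, `E`, `E''` then form a 3 × 3 diagram whose columns and outer rows are short exact, and the
nine lemma (four lemmas for mono/epi, a chase with refinements for exactness) applies. -/

open CategoryTheory CategoryTheory.Limits

universe v u

/-- `Π = {(a,b) ∈ ℤ² : a ≤ b}` with the reverse componentwise order. -/
structure PiSet : Type where
  a : ℤ
  b : ℤ
  le_ab : a ≤ b

instance : PartialOrder PiSet where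
  le x y := y.a ≤ x.a ∧ y.b ≤ x.b
  le_refl x := ⟨le_refl _, le_refl _⟩
  le_trans x y z h h' := ⟨h'.1.trans h.1, h'.2.trans h.2⟩
  le_antisymm x y h h' := by
    cases x; cases y
    simp only [PiSet.mk.injEq]
    exact ⟨le_antisymm h'.1 h.1, le_antisymm h'.2 h.2⟩

variable {𝔄 : Type u} [Category.{v} 𝔄] [Abelian 𝔄]

/-- An object `E` of `𝔄^Π` is *admissible* if for all `a ≤ b ≤ c` the sequence
`0 → E^{b,c} → E^{a,c} → E^{a,b} → 0` (given by the transition maps) is short exact. -/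
def Admissible (E : PiSet ⥤ 𝔄) : Prop :=
  ∀ (a b c : ℤ) (hab : a ≤ b) (hbc : b ≤ c),
    ∃ w : E.map (homOfLE (show (⟨b, c, hbc⟩ : PiSet) ≤ ⟨a, c, hab.trans hbc⟩ from
            ⟨hab, le_refl c⟩)) ≫
          E.map (homOfLE (show (⟨a, c, hab.trans hbc⟩ : PiSet) ≤ ⟨a, b, hab⟩ from
            ⟨le_refl a, hbc⟩)) = 0,
      (ShortComplex.mk _ _ w).ShortExact

namespace CategoryTheory.ShortComplex

variable {C : Type*} [Category* C] [Abelian C] {A B D : ShortComplex C}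

open Preadditive in
lemma exact_of_exact_outer_rows (α : A ⟶ B) (β : B ⟶ D) {w₂ : α.τ₂ ≫ β.τ₂ = 0}
    (hA : A.Exact) (hD : D.Exact) [Epi β.τ₁] [Mono α.τ₃]
    (h₂ : (ShortComplex.mk α.τ₂ β.τ₂ w₂).Exact) : B.Exact := by
  rw [exact_iff_exact_up_to_refinements]
  intro T x (hx : x ≫ B.g = 0)
  have hxD : (x ≫ β.τ₂) ≫ D.g = 0 := by rw [Category.assoc, β.comm₂₃, reassoc_of% hx, zero_comp]
  obtain ⟨T₁, π₁, _, d, hd⟩ := hD.exact_up_to_refinements _ hxD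
  obtain ⟨T₂, π₂, _, b, hb⟩ := surjective_up_to_refinements_of_epi β.τ₁ d
  have hker : (π₂ ≫ π₁ ≫ x - b ≫ B.f) ≫ β.τ₂ = 0 := by
    simp only [sub_comp, Category.assoc]
    rw [sub_eq_zero, (hd : π₁ ≫ x ≫ β.τ₂ = d ≫ D.f), reassoc_of% hb, β.comm₁₂]
  obtain ⟨T₃, π₃, _, a₂, (ha₂ : π₃ ≫ (π₂ ≫ π₁ ≫ x - b ≫ B.f) = a₂ ≫ α.τ₂)⟩ :=
    h₂.exact_up_to_refinements _ hker
  have ha₂g : a₂ ≫ A.g = 0 := by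
    refine zero_of_comp_mono α.τ₃ ?_
    rw [Category.assoc, ← α.comm₂₃, ← Category.assoc, ← ha₂]
    simp [hx]
  obtain ⟨T₄, π₄, _, a₁, (ha₁ : π₄ ≫ a₂ = a₁ ≫ A.f)⟩ := hA.exact_up_to_refinements _ ha₂g
  refine ⟨T₄, π₄ ≫ π₃ ≫ π₂ ≫ π₁, inferInstance, π₄ ≫ π₃ ≫ b + a₁ ≫ α.τ₁, ?_⟩
  simp only [add_comp, Category.assoc]
  rw [α.comm₁₂, ← reassoc_of% ha₁, ← ha₂]
  simp only [comp_sub]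
  abel

/-- The nine lemma, for the 3 × 3 diagram with rows `A`, `B`, `D` and columns
`mk α.τᵢ β.τᵢ _`. -/
lemma shortExact_of_shortExact_outer_rows (α : A ⟶ B) (β : B ⟶ D)
    {w₁ : α.τ₁ ≫ β.τ₁ = 0} {w₂ : α.τ₂ ≫ β.τ₂ = 0} {w₃ : α.τ₃ ≫ β.τ₃ = 0}
    (hA : A.ShortExact) (hD : D.ShortExact)
    (h₁ : (ShortComplex.mk α.τ₁ β.τ₁ w₁).ShortExact)
    (h₂ : (ShortComplex.mk α.τ₂ β.τ₂ w₂).ShortExact)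
    (h₃ : (ShortComplex.mk α.τ₃ β.τ₃ w₃).ShortExact) : B.ShortExact := by
  have := h₁.epi_g
  have := h₃.mono_f
  have : Mono B.f := mono_of_mono_of_mono_of_mono (R₁ := mk _ _ w₁) (R₂ := mk _ _ w₂)
    (homMk A.f B.f D.f α.comm₁₂.symm β.comm₁₂.symm) h₁.exact h₂.mono_f hA.mono_f hD.mono_f
  have : Epi B.g := epi_of_epi_of_epi_of_epi (R₁ := mk _ _ w₂) (R₂ := mk _ _ w₃)
    (homMk A.g B.g D.g α.comm₂₃.symm β.comm₂₃.symm) h₃.exact h₂.epi_g hA.epi_g hD.epi_g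
  exact .mk (exact_of_exact_outer_rows α β hA.exact hD.exact h₂.exact)

end CategoryTheory.ShortComplex

lemma CategoryTheory.Functor.map_comp_map_eq_zero_of_isZero {P C : Type*} [Preorder P]
    [Category C] [HasZeroMorphisms C] (F : P ⥤ C) {x y z p : P} (hxy : x ≤ y) (hyz : y ≤ z)
    (hxp : x ≤ p) (hpz : p ≤ z) (hp : IsZero (F.obj p)) :
    F.map (homOfLE hxy) ≫ F.map (homOfLE hyz) = 0 := by
  rw [← F.map_comp, Subsingleton.elim (homOfLE hxy ≫ homOfLE hyz) (homOfLE hxp ≫ homOfLE hpz),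
    F.map_comp, hp.eq_of_tgt (F.map _) 0, zero_comp]

lemma Admissible.isZero_obj_diag {E : PiSet ⥤ 𝔄} (hE : Admissible E) (b : ℤ) :
    IsZero (E.obj ⟨b, b, le_rfl⟩) := by
  obtain ⟨w, -⟩ := hE b b b le_rfl le_rfl
  rw [← E.map_comp, Subsingleton.elim (_ ≫ _) (𝟙 _), E.map_id] at w
  exact (IsZero.iff_id_eq_zero _).2 w

/-- The admissible objects form an extension-closed subcategory of `𝔄^Π`:
if `0 → E' → E → E'' → 0` is a (pointwise) short exact sequence of `Π`-diagrams
with `E'` and `E''` admissible, then `E` is admissible. -/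
theorem admissible_extension_closed (E' E E'' : PiSet ⥤ 𝔄)
    (η : E' ⟶ E) (θ : E ⟶ E'')
    (hw : ∀ x : PiSet, η.app x ≫ θ.app x = 0)
    (hses : ∀ x : PiSet, (ShortComplex.mk (η.app x) (θ.app x) (hw x)).ShortExact)
    (hE' : Admissible E') (hE'' : Admissible E'') :
    Admissible E := by
  intro a b c hab hbc
  let diag : PiSet := ⟨b, b, le_rfl⟩
  have hdiag : IsZero (E.obj diag) :=
    (hses diag).exact.isZero_X₂ ((hE'.isZero_obj_diag b).eq_of_src _ _)
      ((hE''.isZero_obj_diag b).eq_of_tgt _ _)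
  have w := E.map_comp_map_eq_zero_of_isZero (x := ⟨b, c, hbc⟩) (y := ⟨a, c, hab.trans hbc⟩)
    (z := ⟨a, b, hab⟩) ⟨hab, le_rfl⟩ ⟨le_rfl, hbc⟩ (p := diag) ⟨le_rfl, hbc⟩ ⟨hab, le_rfl⟩ hdiag
  obtain ⟨w', hrow'⟩ := hE' a b c hab hbc
  obtain ⟨w'', hrow''⟩ := hE'' a b c hab hbc
  let α : ShortComplex.mk _ _ w' ⟶ ShortComplex.mk _ _ w := ShortComplex.homMk
    (η.app _) (η.app _) (η.app _) (η.naturality _).symm (η.naturality _).symm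
  let β : ShortComplex.mk _ _ w ⟶ ShortComplex.mk _ _ w'' := ShortComplex.homMk
    (θ.app _) (θ.app _) (θ.app _) (θ.naturality _).symm (θ.naturality _).symm
  exact ⟨w, ShortComplex.shortExact_of_shortExact_outer_rows α β hrow' hrow''
    (hses _) (hses _) (hses _)⟩
end

section
/- Let 𝔄 be an abelian category and let N(𝔄) be the full subcategory of 𝔄^Π consisting of objects E^{•,•} whose image in the localization S⁻¹𝔄^Π is zero, where S is the class of canonical morphisms φ̃(E^{•,•}) → ψ̃(E^{•,•}) for φ ≥ ψ in M. Then N(𝔄) is a Serre subcategory of 𝔄^Π, i.e., it is closed under subobjects, quotients, and extensions. -/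
open CategoryTheory CategoryTheory.Limits

universe v u

variable {𝔄 : Type u} [Category.{v} 𝔄] [Abelian 𝔄]

/-- `M`: order-preserving maps `ℤ → ℤ` tending to `±∞` at `±∞`. -/
def inM (φ : ℤ → ℤ) : Prop :=
  Monotone φ ∧ Filter.Tendsto φ Filter.atTop Filter.atTop ∧
    Filter.Tendsto φ Filter.atBot Filter.atBot

/-- The diagram `φ̃(E)` with `φ̃(E)^{a,b} = E^{φ(a),φ(b)}`. -/
def tilde (φ : ℤ → ℤ) (hφ : Monotone φ) (E : PiSet ⥤ 𝔄) : PiSet ⥤ 𝔄 where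
  obj p := E.obj ⟨φ p.a, φ p.b, hφ p.le_ab⟩
  map {p q} h := E.map (homOfLE ⟨hφ (leOfHom h).1, hφ (leOfHom h).2⟩)
  map_id p := by
    rw [← E.map_id]
    exact congrArg E.map (Subsingleton.elim _ _)
  map_comp f g := by
    rw [← E.map_comp]
    exact congrArg E.map (Subsingleton.elim _ _)

/-- The canonical morphism `φ̃(E) → ψ̃(E)` for `φ ≥ ψ` pointwise, given by transition maps. -/
def canMap (φ ψ : ℤ → ℤ) (hφ : Monotone φ) (hψ : Monotone ψ) (h : ∀ i, ψ i ≤ φ i)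
    (E : PiSet ⥤ 𝔄) : tilde φ hφ E ⟶ tilde ψ hψ E where
  app p := E.map (homOfLE ⟨h _, h _⟩)
  naturality p q f := by
    dsimp [tilde]
    rw [← E.map_comp, ← E.map_comp]
    exact congrArg E.map (Subsingleton.elim _ _)

/-- The class `S` of canonical morphisms `φ̃(E) → ψ̃(E)` for `φ ≥ ψ` in `M`. -/
def Scl : MorphismProperty (PiSet ⥤ 𝔄) := fun X Y f =>
  ∃ (E : PiSet ⥤ 𝔄) (φ ψ : ℤ → ℤ) (hφ : inM φ) (hψ : inM ψ) (h : ∀ i, ψ i ≤ φ i)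
    (hX : X = tilde φ hφ.1 E) (hY : Y = tilde ψ hψ.1 E),
    f = eqToHom hX ≫ canMap φ ψ hφ.1 hψ.1 h E ≫ eqToHom hY.symm

/-- `N(𝔄)`: the objects of `𝔄^Π` which become zero in the localization `S⁻¹𝔄^Π`. -/
def Nsub (E : PiSet ⥤ 𝔄) : Prop :=
  CategoryTheory.Limits.IsZero ((Scl (𝔄 := 𝔄)).Q.obj E)

/-!
An object `E` of `𝔄^Π` is *essentially zero* if for some `φ ∈ M` with `φ ≥ id` all transition
maps `E^{φ(a),φ(b)} → E^{a,b}` vanish. Diagram chases show that essentially zero objects form a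
Serre class. Every morphism `φ̃(E) → ψ̃(E)` of `S` is an isomorphism modulo this class: with
`χ ∈ M`, `χ ≥ id` and `ψ ∘ χ ≥ φ`, the transition maps `(ψ ∘ χ)~(E) → φ̃(E)` invert it up to
reindexing by `χ`, which makes its kernel and cokernel essentially zero. Hence the Serre quotient
functor factors through `S⁻¹𝔄^Π`, so objects of `N(𝔄)` are essentially zero. Conversely, if `E`
is essentially zero, the morphism `φ̃(E) → E` of `S` is zero, and inverting it makes `𝟙 E` zero.
-/

namespace CategoryTheory.NatTrans

variable {C : Type*} [Category C] {T : C ⥤ C} (ε : T ⟶ 𝟭 C)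

lemma app_eq_zero_of_mono [HasZeroMorphisms C] {X Y : C} (f : X ⟶ Y) [Mono f]
    (hY : ε.app Y = 0) : ε.app X = 0 := by
  rw [← cancel_mono f, zero_comp]
  simpa [hY] using (ε.naturality f).symm

lemma app_eq_zero_of_epi [HasZeroMorphisms C] [T.PreservesEpimorphisms] {X Y : C} (f : X ⟶ Y)
    [Epi f] (hX : ε.app X = 0) : ε.app Y = 0 := by
  rw [← cancel_epi (T.map f), comp_zero, ε.naturality, hX, zero_comp]

lemma app_kernel_eq_zero [HasZeroMorphisms C] [T.PreservesZeroMorphisms] {X Y : C} (s : X ⟶ Y)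
    [HasKernel s] (r : T.obj Y ⟶ X) (hr : T.map s ≫ r = ε.app X) : ε.app (kernel s) = 0 := by
  rw [← cancel_mono (kernel.ι s), zero_comp, ← Functor.id_map (kernel.ι s), ← ε.naturality,
    ← hr, ← T.map_comp_assoc, kernel.condition, T.map_zero, zero_comp]

lemma app_cokernel_eq_zero [HasZeroMorphisms C] [T.PreservesEpimorphisms] {X Y : C} (s : X ⟶ Y)
    [HasCokernel s] (r : T.obj Y ⟶ X) (hr : r ≫ s = ε.app Y) : ε.app (cokernel s) = 0 := by
  rw [← cancel_epi (T.map (cokernel.π s)), comp_zero, ε.naturality, ← hr, Functor.id_map,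
    Category.assoc, cokernel.condition, comp_zero]

lemma app_comp_app_eq_zero_of_shortExact [Preadditive C] [Balanced C] {T' : C ⥤ C}
    (ε' : T' ⟶ 𝟭 C) {S : ShortComplex C} (hS : S.ShortExact) (h₁ : ε.app S.X₁ = 0)
    (h₃ : ε'.app S.X₃ = 0) : ε.app (T'.obj S.X₂) ≫ ε'.app S.X₂ = 0 := by
  have := hS.mono_f
  obtain ⟨u, hu⟩ := hS.exact.lift' (ε'.app S.X₂) (by
    rw [← Functor.id_map S.g, ← ε'.naturality, h₃, comp_zero])
  rw [← hu, ← Category.assoc, ← Functor.id_map u, ← ε.naturality, Category.assoc, h₁,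
    zero_comp, comp_zero]

end CategoryTheory.NatTrans

theorem inM_id : inM (id : ℤ → ℤ) :=
  ⟨monotone_id, Filter.tendsto_id, Filter.tendsto_id⟩

theorem inM_comp {φ ψ : ℤ → ℤ} (hφ : inM φ) (hψ : inM ψ) : inM (fun i => φ (ψ i)) :=
  ⟨hφ.1.comp hψ.1, hφ.2.1.comp hψ.2.1, hφ.2.2.comp hψ.2.2⟩

theorem exists_inM_le_comp {φ ψ : ℤ → ℤ} (hφ : inM φ) (hψ : inM ψ) :
    ∃ χ : ℤ → ℤ, inM χ ∧ (∀ i, i ≤ χ i) ∧ ∀ i, φ i ≤ ψ (χ i) := by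
  have hbdd : ∀ i : ℤ, ∃ b, ∀ n, φ i ≤ ψ n → b ≤ n := by
    intro i
    obtain ⟨a, ha⟩ := Filter.eventually_atBot.mp (hψ.2.2.eventually_lt_atBot (φ i))
    exact ⟨a + 1, fun n hn => by_contra fun hc => (ha n (by omega)).not_ge hn⟩
  have hex : ∀ i : ℤ, ∃ n, φ i ≤ ψ n := fun i => (hψ.2.1.eventually_ge_atTop (φ i)).exists
  choose ρ hρ hρ_least using fun i => Int.exists_least_of_bdd (hbdd i) (hex i)
  have hρ_mono : Monotone ρ := fun i j hij => hρ_least i (ρ j) ((hφ.1 hij).trans (hρ j))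
  refine ⟨fun i => max i (ρ i), ⟨monotone_id.max hρ_mono,
    Filter.tendsto_atTop_mono (fun i => le_max_left _ _) Filter.tendsto_id, ?_⟩,
    fun i => le_max_left _ _, fun i => (hρ i).trans (hψ.1 (le_max_right _ _))⟩
  rw [Filter.tendsto_atBot]
  intro b
  filter_upwards [hφ.2.2.eventually_le_atBot (ψ b), Filter.eventually_le_atBot b] with i hi hib
  exact max_le hib (hρ_least i b hi)

def PiSet.reindex (φ : ℤ → ℤ) (hφ : Monotone φ) : PiSet ⥤ PiSet :=
  Monotone.functor (f := fun p => (⟨φ p.a, φ p.b, hφ p.le_ab⟩ : PiSet))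
    fun _ _ h => ⟨hφ h.1, hφ h.2⟩

def tildeFunctor (φ : ℤ → ℤ) (hφ : Monotone φ) : (PiSet ⥤ 𝔄) ⥤ (PiSet ⥤ 𝔄) :=
  (Functor.whiskeringLeft _ _ _).obj (PiSet.reindex φ hφ)

instance (φ : ℤ → ℤ) (hφ : Monotone φ) : (tildeFunctor (𝔄 := 𝔄) φ hφ).PreservesZeroMorphisms :=
  inferInstanceAs ((Functor.whiskeringLeft _ _ _).obj _).PreservesZeroMorphisms

instance (φ : ℤ → ℤ) (hφ : Monotone φ) : (tildeFunctor (𝔄 := 𝔄) φ hφ).PreservesEpimorphisms where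
  preserves f hf :=
    have (p : PiSet) : Epi (((tildeFunctor φ hφ).map f).app p) :=
      (NatTrans.epi_iff_epi_app f).1 hf _
    NatTrans.epi_of_epi_app _

def tildeToId (φ : ℤ → ℤ) (hφ : Monotone φ) (h : ∀ i, i ≤ φ i) :
    tildeFunctor (𝔄 := 𝔄) φ hφ ⟶ 𝟭 _ where
  app := canMap φ id hφ monotone_id h
  naturality _ _ f := by
    ext p
    exact (f.naturality _).symm

omit [Abelian 𝔄] in
theorem tildeToId_app_comp {φ ψ : ℤ → ℤ} (hφ : Monotone φ) (hψ : Monotone ψ)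
    (h : ∀ i, i ≤ φ i) (h' : ∀ i, i ≤ ψ i) (E : PiSet ⥤ 𝔄) :
    (tildeToId (fun i => ψ (φ i)) (hψ.comp hφ) fun i => (h i).trans (h' _)).app E =
      (tildeToId φ hφ h).app ((tildeFunctor ψ hψ).obj E) ≫ (tildeToId ψ hψ h').app E := by
  ext p
  show E.map _ = E.map _ ≫ E.map _
  exact E.map_comp _ _

variable (𝔄) in
def EssentiallyZero : ObjectProperty (PiSet ⥤ 𝔄) := fun E =>
  ∃ (φ : ℤ → ℤ) (hφ : inM φ) (h : ∀ i, i ≤ φ i), (tildeToId φ hφ.1 h).app E = 0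

open ZeroObject in
instance : (EssentiallyZero 𝔄).IsSerreClass where
  exists_zero := ⟨0, isZero_zero _, id, inM_id, fun _ => le_rfl, (isZero_zero _).eq_of_tgt _ _⟩
  prop_of_mono f _ := fun ⟨φ, hφ, h, hY⟩ => ⟨φ, hφ, h, NatTrans.app_eq_zero_of_mono _ f hY⟩
  prop_of_epi f _ := fun ⟨φ, hφ, h, hX⟩ => ⟨φ, hφ, h, NatTrans.app_eq_zero_of_epi _ f hX⟩
  prop_X₂_of_shortExact hS := fun ⟨φ, hφ, h, h₁⟩ ⟨ψ, hψ, h', h₃⟩ =>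
    ⟨fun i => ψ (φ i), inM_comp hψ hφ, fun i => (h i).trans (h' _), by
      rw [tildeToId_app_comp hφ.1 hψ.1 h h']
      exact NatTrans.app_comp_app_eq_zero_of_shortExact _ _ hS h₁ h₃⟩

theorem Scl_le_isoModSerre : Scl ≤ (EssentiallyZero 𝔄).isoModSerre := by
  rintro _ _ _ ⟨E, φ, ψ, hφ, hψ, hψφ, rfl, rfl, rfl⟩
  obtain ⟨χ, hχ, hidχ, hφχ⟩ := exists_inM_le_comp hφ hψ
  -- `r` inverts `canMap φ ψ` up to reindexing by `χ`, from either side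
  let r := canMap (fun i => ψ (χ i)) φ (hψ.1.comp hχ.1) hφ.1 hφχ E
  simp only [eqToHom_refl, Category.id_comp, Category.comp_id]
  refine ⟨⟨χ, hχ, hidχ, NatTrans.app_kernel_eq_zero _ _ r ?_⟩,
    ⟨χ, hχ, hidχ, NatTrans.app_cokernel_eq_zero _ _ r ?_⟩⟩
  all_goals
    ext p
    exact (E.map_comp _ _).symm

theorem MorphismProperty.isZero_Q_obj_iff {C : Type*} [Category C] [HasZeroMorphisms C]
    (W : MorphismProperty C) (X : C) :
    IsZero (W.Q.obj X) ↔ AreEqualizedByLocalization W (𝟙 X) 0 := by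
  refine ⟨fun h => h.eq_of_src _ _, fun h => ⟨fun Y => ?_, fun Y => ?_⟩⟩
  -- the maps `Q.map 0` out of (into) `X` extend to a natural transformation on the localization,
  -- whose component at `Q X` is `𝟙`; naturality then pins down every morphism out of (into) `Q X`
  · let θ : (Functor.const _).obj (W.Q.obj X) ⟶ 𝟭 _ := Localization.Construction.natTransExtension
      { app := fun Z => W.Q.map (0 : X ⟶ Z)
        naturality := fun _ _ f => by simp [← Functor.map_comp] }
    have hθ : θ.app (W.Q.obj X) = 𝟙 _ := h.symm.trans (W.Q.map_id X)
    exact ⟨⟨⟨θ.app Y⟩, fun g => by simpa [hθ] using (θ.naturality g).symm⟩⟩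
  · let θ : 𝟭 _ ⟶ (Functor.const _).obj (W.Q.obj X) := Localization.Construction.natTransExtension
      { app := fun Z => W.Q.map (0 : Z ⟶ X)
        naturality := fun _ _ f => by simp [← Functor.map_comp] }
    have hθ : θ.app (W.Q.obj X) = 𝟙 _ := h.symm.trans (W.Q.map_id X)
    exact ⟨⟨⟨θ.app Y⟩, fun g => by simpa [hθ] using θ.naturality g⟩⟩

theorem essentiallyZero_of_nsub {E : PiSet ⥤ 𝔄} (h : Nsub E) : EssentiallyZero 𝔄 E := by
  have hQ : (EssentiallyZero 𝔄).isoModSerre.Q.map (𝟙 E) =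
      (EssentiallyZero 𝔄).isoModSerre.Q.map 0 :=
    ((MorphismProperty.isZero_Q_obj_iff _ _).1 h).map_eq_of_isInvertedBy _
      fun _ _ s hs => Localization.inverts _ _ _ (Scl_le_isoModSerre _ hs)
  refine (ObjectProperty.SerreClassLocalization.isZero_obj_iff
    (EssentiallyZero 𝔄).isoModSerre.Q _ E).1 ?_
  rw [IsZero.iff_id_eq_zero, ← CategoryTheory.Functor.map_id, hQ, Functor.map_zero]

theorem nsub_of_essentiallyZero {E : PiSet ⥤ 𝔄} (h : EssentiallyZero 𝔄 E) : Nsub E := by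
  obtain ⟨φ, hφ, hle, h0⟩ := h
  have hs : Scl (canMap φ id hφ.1 inM_id.1 hle E) := ⟨E, φ, id, hφ, inM_id, hle, rfl, rfl, by simp⟩
  let s : tilde φ hφ.1 E ⟶ E := canMap φ id hφ.1 inM_id.1 hle E
  have : IsIso (Scl.Q.map s) := Localization.inverts Scl.Q Scl _ hs
  rw [Nsub, MorphismProperty.isZero_Q_obj_iff, AreEqualizedByLocalization,
    ← cancel_epi (Scl.Q.map s), ← Functor.map_comp, ← Functor.map_comp, Category.comp_id,
    comp_zero]
  exact congrArg Scl.Q.map h0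

theorem nsub_iff_essentiallyZero (E : PiSet ⥤ 𝔄) : Nsub E ↔ EssentiallyZero 𝔄 E :=
  ⟨essentiallyZero_of_nsub, nsub_of_essentiallyZero⟩

/-- `N(𝔄)` is a Serre subcategory of `𝔄^Π`: it is closed under subobjects,
quotients, and extensions. -/
theorem Nsub_serre :
    (∀ (A B : PiSet ⥤ 𝔄) (f : A ⟶ B), Mono f → Nsub B → Nsub A) ∧
    (∀ (A B : PiSet ⥤ 𝔄) (f : A ⟶ B), Epi f → Nsub A → Nsub B) ∧
    (∀ (S : ShortComplex (PiSet ⥤ 𝔄)), S.ShortExact →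
      Nsub S.X₁ → Nsub S.X₃ → Nsub S.X₂) := by
  simp only [nsub_iff_essentiallyZero]
  exact ⟨fun _ _ f _ => (EssentiallyZero 𝔄).prop_of_mono f,
    fun _ _ f _ => (EssentiallyZero 𝔄).prop_of_epi f,
    fun _ hS => (EssentiallyZero 𝔄).prop_X₂_of_shortExact hS⟩
end

section
/- Let A be a commutative ℚ-algebra with derivation ∂ and t ∈ A× with ∂t = 1. Define the pairing ⟨·,·⟩: I^{a,b} × I^{-b,-a} → A by ⟨x(s)·t^s, g(s)·t^s⟩ := Res_{s=0}(x(s) g(-s)), where Res_{s=0} of a Laurent polynomial in s over A is the coefficient of s⁻¹. Then this pairing is well defined (independent of representatives) and non-degenerate: it induces an isomorphism I^{-b,-a} ≅ Hom_A(I^{a,b}, A). -/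
/-!
Reading off the coefficients of `s^a, …, s^(b-1)` identifies `I^{a,b}` with `A^(b-a)`, and
reading off those of `s^(-1-a), …, s^(-b)` identifies `I^{-b,-a}` with `A^(b-a)` as well. In
these coordinates the residue pairing is `∑_{a ≤ k < b} (-1)^(k+1) x_k g_(-1-k)`, the standard
pairing `A^n × A^n → A` twisted by signs, which are units; hence it is perfect. Well-definedness
is the case `a = b` of the same formula.
-/

open LaurentPolynomial

variable {A : Type*} [CommRing A]

/-- The residue pairing `⟨x, g⟩ = Res_{s=0}(x(s) g(-s))`, the coefficient of `s⁻¹`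
in `x(s)·g(-s)`: concretely `∑_k (-1)^{k+1} x_k g_{-1-k}`. -/
noncomputable def resPair (x g : LaurentPolynomial A) : A :=
  (AddMonoidAlgebra.coeff x).sum fun k c => ((Int.negOnePow (k + 1) : ℤˣ) : ℤ) • (c * AddMonoidAlgebra.coeff g (-1 - k))

/-- `s^c A[s]·t^s`: the `A`-submodule of `A[s,s⁻¹]·t^s` spanned by `s^k t^s`, `k ≥ c`. -/
noncomputable def Ipow (c : ℤ) : Submodule A (LaurentPolynomial A) :=
  Submodule.span A ((fun k : ℤ => (T k : LaurentPolynomial A)) '' {k : ℤ | c ≤ k})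

/-- The quotient `I^{a,b} = s^a A[s]·t^s / s^b A[s]·t^s`. -/
noncomputable abbrev Iab (A : Type*) [CommRing A] (a b : ℤ) :=
  ↥(Ipow (A := A) a) ⧸ (Ipow (A := A) b).comap (Ipow (A := A) a).subtype

theorem Ipow_eq_supported (c : ℤ) :
    Ipow (A := A) c = AddMonoidAlgebra.supported A A (Set.Ici c) :=
  (AddMonoidAlgebra.supported_eq_span_single ..).symm

theorem mem_Ipow_iff {c : ℤ} {x : LaurentPolynomial A} :
    x ∈ Ipow (A := A) c ↔ ∀ k < c, x.coeff k = 0 := by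
  simp [Ipow_eq_supported, AddMonoidAlgebra.mem_supported']

section Coefficients

variable {ι : Type*} {c d : ℤ}

noncomputable def coeffsAt (c : ℤ) (e : ι → ℤ) : Ipow (A := A) c →ₗ[A] (ι → A) where
  toFun x i := (x : LaurentPolynomial A).coeff (e i)
  map_add' _ _ := rfl
  map_smul' _ _ := rfl

@[simp]
theorem coeffsAt_apply (e : ι → ℤ) (x : Ipow (A := A) c) (i : ι) :
    coeffsAt c e x i = (x : LaurentPolynomial A).coeff (e i) := rfl

theorem coeffsAt_surjective [Fintype ι] {e : ι → ℤ} (he : Function.Injective e)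
    (hc : ∀ i, c ≤ e i) : Function.Surjective (coeffsAt (A := A) c e) := by
  classical
  intro v
  refine ⟨∑ i, v i • ⟨T (e i), Submodule.subset_span ⟨e i, hc i, rfl⟩⟩,
    funext fun j => ?_⟩
  simp [he.eq_iff]

theorem ker_coeffsAt (e : ι ≃ Finset.Ico c d) :
    LinearMap.ker (coeffsAt (A := A) c (fun i => e i)) =
      (Ipow (A := A) d).comap (Ipow (A := A) c).subtype := by
  ext ⟨x, hx⟩
  rw [mem_Ipow_iff] at hx
  simp only [LinearMap.mem_ker, Submodule.mem_comap, Submodule.subtype_apply, mem_Ipow_iff,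
    funext_iff, coeffsAt_apply, Pi.zero_apply]
  constructor
  · intro h k hk
    by_cases hck : c ≤ k
    · simpa using h (e.symm ⟨k, Finset.mem_Ico.2 ⟨hck, hk⟩⟩)
    · exact hx k (not_le.1 hck)
  · intro h i
    exact h _ (Finset.mem_Ico.1 (e i).2).2

noncomputable def Iab.equivPi [Fintype ι] (e : ι ≃ Finset.Ico c d) :
    Iab A c d ≃ₗ[A] (ι → A) :=
  let f : Ipow (A := A) c →ₗ[A] (ι → A) := coeffsAt c fun i => (e i : ℤ)
  have hsurj : Function.Surjective f :=
    coeffsAt_surjective (Subtype.val_injective.comp e.injective)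
      fun i => (Finset.mem_Ico.1 (e i).2).1
  have hker : (Ipow (A := A) d).comap (Ipow (A := A) c).subtype = LinearMap.ker f :=
    (ker_coeffsAt e).symm
  (Submodule.quotEquivOfEq _ _ hker).trans (f.quotKerEquivOfSurjective hsurj)

theorem Iab.equivPi_mk [Fintype ι] (e : ι ≃ Finset.Ico c d) (x : Ipow (A := A) c) (i : ι) :
    Iab.equivPi e (Submodule.Quotient.mk x) i = (x : LaurentPolynomial A).coeff (e i) := rfl

end Coefficients

theorem resPair_eq_sum_Ico {a b : ℤ} {x g : LaurentPolynomial A} (hx : x ∈ Ipow (A := A) a)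
    (hg : g ∈ Ipow (A := A) (-b)) :
    resPair x g = ∑ k ∈ Finset.Ico a b,
      ((Int.negOnePow (k + 1) : ℤˣ) : ℤ) • (x.coeff k * g.coeff (-1 - k)) := by
  rw [mem_Ipow_iff] at hx hg
  refine Finset.sum_congr_of_eq_on_inter (fun k _ hk => ?_) (fun k _ hk => ?_) fun _ _ _ => rfl
  · rcases lt_or_ge k a with hka | hka
    · simp [hx k hka]
    · simp [hg (-1 - k) (by simp [Finset.mem_Ico] at hk; omega)]
  · simp [Finsupp.notMem_support_iff.1 hk]

theorem resPair_eq_zero_of_mem {c : ℤ} {x g : LaurentPolynomial A} (hx : x ∈ Ipow (A := A) c)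
    (hg : g ∈ Ipow (A := A) (-c)) : resPair x g = 0 := by
  simp [resPair_eq_sum_Ico hx hg]

def Int.icoEquivIcoNeg (a b : ℤ) : Finset.Ico a b ≃ Finset.Ico (-b) (-a) :=
  (Equiv.subLeft (-1)).subtypeEquiv fun k => by
    simp only [Finset.mem_Ico, Equiv.subLeft_apply]; omega

theorem resPair_wellDefined_nondegenerate_general (a b : ℤ) :
    (∀ x ∈ Ipow (A := A) b, ∀ g ∈ Ipow (A := A) (-b), resPair x g = 0) ∧
    (∀ x ∈ Ipow (A := A) a, ∀ g ∈ Ipow (A := A) (-a), resPair x g = 0) ∧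
    ∃ e : Iab A (-b) (-a) ≃ₗ[A] (Iab A a b →ₗ[A] A),
      ∀ (g : ↥(Ipow (A := A) (-b))) (x : ↥(Ipow (A := A) a)),
        e (Submodule.Quotient.mk g) (Submodule.Quotient.mk x) = resPair ↑x ↑g := by
  refine ⟨fun x hx g hg => resPair_eq_zero_of_mem hx hg,
    fun x hx g hg => resPair_eq_zero_of_mem hx hg, ?_⟩
  let sign : (Finset.Ico a b → A) ≃ₗ[A] (Finset.Ico a b → A) :=
    LinearEquiv.piCongrRight fun k => DistribMulAction.toLinearEquiv A A (Int.negOnePow (k + 1))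
  refine ⟨Iab.equivPi (Int.icoEquivIcoNeg a b) ≪≫ₗ sign ≪≫ₗ Module.piEquiv _ A A ≪≫ₗ
      (Iab.equivPi (Equiv.refl _)).symm.arrowCongr (LinearEquiv.refl A A),
    fun g x => ?_⟩
  simp [sign, Module.piEquiv_apply_apply, Iab.equivPi_mk, resPair_eq_sum_Ico x.2 g.2,
    Int.icoEquivIcoNeg, Units.smul_def, ← Finset.sum_coe_sort (Finset.Ico a b), mul_left_comm]

/-- The residue pairing `I^{a,b} × I^{-b,-a} → A` is well defined (it vanishes when
one argument lies in the respective sub-submodule) and non-degenerate: it induces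
an isomorphism `I^{-b,-a} ≅ Hom_A(I^{a,b}, A)`. -/
theorem resPair_wellDefined_nondegenerate [Algebra ℚ A]
    (D : Derivation ℤ A A) (t : Aˣ) (ht : D (↑t : A) = 1) (a b : ℤ) (hab : a ≤ b) :
    (∀ x ∈ Ipow (A := A) b, ∀ g ∈ Ipow (A := A) (-b), resPair x g = 0) ∧
    (∀ x ∈ Ipow (A := A) a, ∀ g ∈ Ipow (A := A) (-a), resPair x g = 0) ∧
    ∃ e : Iab A (-b) (-a) ≃ₗ[A] (Iab A a b →ₗ[A] A),
      ∀ (g : ↥(Ipow (A := A) (-b))) (x : ↥(Ipow (A := A) a)),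
        e (Submodule.Quotient.mk g) (Submodule.Quotient.mk x) = resPair ↑x ↑g :=
  resPair_wellDefined_nondegenerate_general a b
end

section
/- Let 𝔄 be an abelian category, and in 𝔄^Π consider an admissible object E^{•,•} together with, for each (a,b) ∈ Π, a morphism α^{a,b}: E^{a,b} → F^{a,b} between admissible objects, compatible with transitions. Suppose there exist an integer N ≥ 0 and a morphism β^{•,•}: F^{•+N,•+N} → E^{•,•} of Π-diagrams such that α^{•,•} ∘ β^{•,•} and β^{•,•} ∘ α^{•+N,•+N} are the canonical transition morphisms. Then for every (a,b) ∈ Π, the kernel and cokernel of α^{a,b}: E^{a,b} → F^{a,b} are annihilated in the following sense: the transition morphism ker α^{a+N,b+N} → ker α^{a,b} is zero, and similarly coker α^{a+N,b+N} → coker α^{a,b} is zero; consequently α becomes an isomorphism in the localization (S^f)⁻¹𝔄^Π. -/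
open CategoryTheory CategoryTheory.Limits

universe v u

variable {𝔄 : Type u} [Category.{v} 𝔄] [Abelian 𝔄]

/-- `M^f`: monotone maps `ℤ → ℤ` within bounded distance of the identity. -/
def inMf (φ : ℤ → ℤ) : Prop :=
  Monotone φ ∧ ∃ N : ℤ, 0 ≤ N ∧ ∀ i : ℤ, i - N ≤ φ i ∧ φ i ≤ i + N

/-- `φ̃` applied to a morphism of diagrams. -/
def tildeMap (φ : ℤ → ℤ) (hφ : Monotone φ) {E F : PiSet ⥤ 𝔄} (α : E ⟶ F) :
    tilde φ hφ E ⟶ tilde φ hφ F where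
  app p := α.app ⟨φ p.a, φ p.b, hφ p.le_ab⟩
  naturality _ _ h := α.naturality _

/-- The canonical morphism `φ̃(E) → E` for `φ ≥ id` pointwise. -/
def canToId (φ : ℤ → ℤ) (hφ : Monotone φ) (h : ∀ i, i ≤ φ i) (E : PiSet ⥤ 𝔄) :
    tilde φ hφ E ⟶ E where
  app p := E.map (homOfLE ⟨h _, h _⟩)
  naturality p q f := by
    dsimp [tilde]
    rw [← E.map_comp, ← E.map_comp]
    exact congrArg E.map (Subsingleton.elim _ _)

/-- The class `S^f` of canonical morphisms `φ̃(E) → ψ̃(E)` for `φ ≥ ψ` in `M^f`. -/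
def Sclf : MorphismProperty (PiSet ⥤ 𝔄) := fun X Y f =>
  ∃ (E : PiSet ⥤ 𝔄) (φ ψ : ℤ → ℤ) (hφ : inMf φ) (hψ : inMf ψ) (h : ∀ i, ψ i ≤ φ i)
    (hX : X = tilde φ hφ.1 E) (hY : Y = tilde ψ hψ.1 E),
    f = eqToHom hX ≫ canMap φ ψ hφ.1 hψ.1 h E ≫ eqToHom hY.symm

lemma monotone_add (N : ℤ) : Monotone (fun i : ℤ => i + N) :=
  fun _ _ h => by dsimp only; omega

/-- the index `(a+N, b+N)` -/
def pshift (N : ℤ) (p : PiSet) : PiSet := ⟨p.a + N, p.b + N, by have := p.le_ab; omega⟩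

/-- the transition arrow `(a+N,b+N) ⟶ (a,b)` for `N ≥ 0` -/
def shiftHom (N : ℤ) (hN : 0 ≤ N) (p : PiSet) : pshift N p ⟶ p :=
  homOfLE ⟨le_add_of_nonneg_right hN, le_add_of_nonneg_right hN⟩

/-! On each component the transition map of `E` factors as `α ≫ β` and that of `F` as `β ≫ α`,
so it vanishes on `ker α` resp. `coker α`. In the localization both composites become
invertible, so `β` has a left and a right inverse there; hence `β`, and then `α`, is an
isomorphism. -/

section ZeroOnKernelsAndCokernels

variable {C : Type*} [Category C] [HasZeroMorphisms C] {X Y X' Y' : C}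

lemma kernel_map_eq_zero_of_eq_comp (f : X ⟶ Y) (f' : X' ⟶ Y') [HasKernel f] [HasKernel f']
    (p : X ⟶ X') (q : Y ⟶ Y') (w : f ≫ q = p ≫ f') (g : Y ⟶ X') (hp : p = f ≫ g) :
    kernel.map f f' p q w = 0 := by
  rw [← cancel_mono (kernel.ι f'), kernel.lift_ι, hp, kernel.condition_assoc, zero_comp,
    zero_comp]

lemma cokernel_map_eq_zero_of_eq_comp (f : X ⟶ Y) (f' : X' ⟶ Y') [HasCokernel f]
    [HasCokernel f'] (p : X ⟶ X') (q : Y ⟶ Y') (w : f ≫ q = p ≫ f') (g : Y ⟶ X')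
    (hq : q = g ≫ f') : cokernel.map f f' p q w = 0 := by
  rw [← cancel_epi (cokernel.π f), cokernel.π_desc, hq, Category.assoc, cokernel.condition,
    comp_zero, comp_zero]

end ZeroOnKernelsAndCokernels

lemma isIso_of_isIso_comp_of_isIso_comp {C : Type*} [Category C] {W X Y Z : C}
    (f : W ⟶ X) (g : X ⟶ Y) (h : Y ⟶ Z) [IsIso (f ≫ g)] [IsIso (g ≫ h)] : IsIso g := by
  have left_inv : (inv (f ≫ g) ≫ f) ≫ g = 𝟙 Y := by rw [Category.assoc, IsIso.inv_hom_id]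
  have right_inv : g ≫ h ≫ inv (g ≫ h) = 𝟙 X := by rw [← Category.assoc, IsIso.hom_inv_id]
  refine ⟨h ≫ inv (g ≫ h), right_inv, ?_⟩
  calc (h ≫ inv (g ≫ h)) ≫ g = ((inv (f ≫ g) ≫ f) ≫ g) ≫ (h ≫ inv (g ≫ h)) ≫ g := by
        rw [left_inv, Category.id_comp]
    _ = (inv (f ≫ g) ≫ f) ≫ (g ≫ h ≫ inv (g ≫ h)) ≫ g := by simp only [Category.assoc]
    _ = 𝟙 Y := by rw [right_inv, Category.id_comp, left_inv]

section Diagrams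

variable {C : Type*} [Category C]

lemma inMf_add (N : ℤ) : inMf (fun i => i + N) :=
  ⟨monotone_add N, |N|, abs_nonneg N,
    fun i => ⟨by linarith [neg_abs_le N], by linarith [le_abs_self N]⟩⟩

-- `(tilde id E).obj p` is `E.obj p` only up to unfolding, so `eqToHom_refl` does not fire and
-- the `eqToHom`s are removed by `comp_id` / `id_comp` up to defeq.
lemma tilde_id (E : PiSet ⥤ C) : tilde id monotone_id E = E :=
  CategoryTheory.Functor.ext (fun _ => rfl) fun _ _ _ =>
    ((Category.id_comp _).trans (Category.comp_id _)).symm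

lemma canToId_mem_Sclf (φ : ℤ → ℤ) (hφ : inMf φ) (h : ∀ i, i ≤ φ i) (E : PiSet ⥤ C) :
    Sclf (canToId φ hφ.1 h E) := by
  refine ⟨E, φ, id, hφ, ⟨monotone_id, 0, le_rfl, fun i => by simp⟩, h, rfl,
    (tilde_id E).symm, ?_⟩
  ext p
  simp only [NatTrans.comp_app, eqToHom_refl, Category.id_comp, eqToHom_app]
  exact (Category.comp_id _).symm

lemma canToId_add_app (N : ℤ) (hN : 0 ≤ N) (E : PiSet ⥤ C) (p : PiSet) :
    (canToId (fun i => i + N) (monotone_add N) (fun _ => le_add_of_nonneg_right hN) E).app p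
      = E.map (shiftHom N hN p) :=
  rfl

end Diagrams

theorem shifted_inverse_kills_ker_coker_general (E F : PiSet ⥤ 𝔄)
    (α : E ⟶ F)
    (N : ℤ) (hN : 0 ≤ N)
    (β : tilde (fun i => i + N) (monotone_add N) F ⟶ E)
    (hβα : β ≫ α = canToId (fun i => i + N) (monotone_add N)
      (fun i => le_add_of_nonneg_right hN) F)
    (hαβ : tildeMap (fun i => i + N) (monotone_add N) α ≫ β
      = canToId (fun i => i + N) (monotone_add N) (fun i => le_add_of_nonneg_right hN) E) :
    (∀ p : PiSet,
      kernel.map (α.app (pshift N p)) (α.app p)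
        (E.map (shiftHom N hN p)) (F.map (shiftHom N hN p))
        (α.naturality (shiftHom N hN p)).symm = 0) ∧
    (∀ p : PiSet,
      cokernel.map (α.app (pshift N p)) (α.app p)
        (E.map (shiftHom N hN p)) (F.map (shiftHom N hN p))
        (α.naturality (shiftHom N hN p)).symm = 0) ∧
    IsIso ((Sclf (𝔄 := 𝔄)).Q.map α) := by
  have shift_E (p : PiSet) : E.map (shiftHom N hN p) = α.app (pshift N p) ≫ β.app p := by
    rw [← canToId_add_app N hN, ← hαβ]
    rfl
  have shift_F (p : PiSet) : F.map (shiftHom N hN p) = β.app p ≫ α.app p := by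
    rw [← canToId_add_app N hN, ← hβα]
    rfl
  refine ⟨fun p => kernel_map_eq_zero_of_eq_comp _ _ _ _ _ _ (shift_E p),
    fun p => cokernel_map_eq_zero_of_eq_comp _ _ _ _ _ _ (shift_F p), ?_⟩
  set L := (Sclf (𝔄 := 𝔄)).Q
  have inverts (X : PiSet ⥤ 𝔄) := Localization.inverts L Sclf _
    (canToId_mem_Sclf _ (inMf_add N) (fun _ => le_add_of_nonneg_right hN) X)
  have : IsIso (L.map (tildeMap (fun i => i + N) (monotone_add N) α) ≫ L.map β) := by
    rw [← L.map_comp, hαβ]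
    exact inverts E
  have : IsIso (L.map β ≫ L.map α) := by
    rw [← L.map_comp, hβα]
    exact inverts F
  have := isIso_of_isIso_comp_of_isIso_comp
    (L.map (tildeMap (fun i => i + N) (monotone_add N) α)) (L.map β) (L.map α)
  exact IsIso.of_isIso_comp_left (L.map β) (L.map α)

/-- If a morphism `α : E → F` of admissible `Π`-diagrams admits an `N`-shifted
inverse `β`, then the transition morphisms `ker α^{a+N,b+N} → ker α^{a,b}` and
`coker α^{a+N,b+N} → coker α^{a,b}` vanish, and `α` becomes an isomorphism in
the localization `(S^f)⁻¹𝔄^Π`. -/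
theorem shifted_inverse_kills_ker_coker (E F : PiSet ⥤ 𝔄)
    (hE : Admissible E) (hF : Admissible F) (α : E ⟶ F)
    (N : ℤ) (hN : 0 ≤ N)
    (β : tilde (fun i => i + N) (monotone_add N) F ⟶ E)
    (hβα : β ≫ α = canToId (fun i => i + N) (monotone_add N)
      (fun i => le_add_of_nonneg_right hN) F)
    (hαβ : tildeMap (fun i => i + N) (monotone_add N) α ≫ β
      = canToId (fun i => i + N) (monotone_add N) (fun i => le_add_of_nonneg_right hN) E) :
    (∀ p : PiSet,
      kernel.map (α.app (pshift N p)) (α.app p)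
        (E.map (shiftHom N hN p)) (F.map (shiftHom N hN p))
        (α.naturality (shiftHom N hN p)).symm = 0) ∧
    (∀ p : PiSet,
      cokernel.map (α.app (pshift N p)) (α.app p)
        (E.map (shiftHom N hN p)) (F.map (shiftHom N hN p))
        (α.naturality (shiftHom N hN p)).symm = 0) ∧
    IsIso ((Sclf (𝔄 := 𝔄)).Q.map α) :=
  shifted_inverse_kills_ker_coker_general E F α N hN β hβα hαβ
end

section
/- In the setting of an abelian category 𝔄 and the exact functor lim↔: 𝔄^Π_a → lim↔ 𝔄, suppose one is given for each object E of an abelian category ℋ two exact functors j_!, j_+ : ℋ → 𝒜 into an abelian category 𝒜, a natural transformation j_! → j_+, and for fixed integers a ≤ b an object Π^{a,b}(E) defined as a quotient Q_+/im(Q_!) fitting in exact sequences 0 → j_!(E)(i) → Ξ^{(i)}(E) → Ψ^{(i)}(E) → 0 and 0 → Ψ^{(i+1)}(E) → Ξ^{(i)}(E) → j_+(E)(i) → 0 where (i) denotes an exact twist autoequivalence of 𝒜. Then the functor Φ(M) for M ∈ 𝒜 with M_Y := j^+(M), defined as the middle cohomology of j_! M_Y →^{(α_-, γ_-)} Ξ(M_Y)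 ⊕ M →^{(α_+, -γ_+)} j_+ M_Y, is exact, provided α_- is injective, α_+ is surjective, j^+, j_!, j_+, Ξ are exact, and the composites satisfy α_+ ∘ α_- = γ_+ ∘ γ_- as maps j_! M_Y → j_+ M_Y. -/
open CategoryTheory CategoryTheory.Limits

variable {𝒜 ℋ : Type*} [Category 𝒜] [Category ℋ] [Abelian 𝒜] [Abelian ℋ]

variable (jl jp : ℋ ⥤ 𝒜) (ju : 𝒜 ⥤ ℋ) (Xi : ℋ ⥤ 𝒜)
  (αm : jl ⟶ Xi) (αp : Xi ⟶ jp)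
  (γm : ju ⋙ jl ⟶ 𝟭 𝒜) (γp : 𝟭 𝒜 ⟶ ju ⋙ jp)

/-- The three-term complex `j_! j⁺M → Ξ(j⁺M) ⊕ M → j_+ j⁺M` defining the
vanishing cycles functor `Φ`. -/
noncomputable def phiCplx
    (hw : ∀ M : 𝒜, αm.app (ju.obj M) ≫ αp.app (ju.obj M) = γm.app M ≫ γp.app M)
    (M : 𝒜) : ShortComplex 𝒜 where
  X₁ := jl.obj (ju.obj M)
  X₂ := Xi.obj (ju.obj M) ⊞ M
  X₃ := jp.obj (ju.obj M)
  f := biprod.lift (αm.app (ju.obj M)) (γm.app M)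
  g := biprod.desc (αp.app (ju.obj M)) (-γp.app M)
  zero := by
    simp only [biprod.lift_desc, Preadditive.comp_neg, hw M]
    exact add_neg_cancel _

/-- `Φ(M)`: the middle cohomology of `j_! j⁺M → Ξ(j⁺M) ⊕ M → j_+ j⁺M`. -/
noncomputable def phiObj
    (hw : ∀ M : 𝒜, αm.app (ju.obj M) ≫ αp.app (ju.obj M) = γm.app M ≫ γp.app M)
    (M : 𝒜) : 𝒜 :=
  (phiCplx jl jp ju Xi αm αp γm γp hw M).homology

/-- The morphism of defining complexes induced by `f : M ⟶ M'`. -/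
noncomputable def phiCplxMap
    (hw : ∀ M : 𝒜, αm.app (ju.obj M) ≫ αp.app (ju.obj M) = γm.app M ≫ γp.app M)
    {M M' : 𝒜} (f : M ⟶ M') :
    phiCplx jl jp ju Xi αm αp γm γp hw M ⟶ phiCplx jl jp ju Xi αm αp γm γp hw M' where
  τ₁ := jl.map (ju.map f)
  τ₂ := biprod.map (Xi.map (ju.map f)) f
  τ₃ := jp.map (ju.map f)
  comm₁₂ := by
    dsimp [phiCplx]
    apply biprod.hom_ext
    · simp [← αm.naturality (ju.map f)]
    · have := γm.naturality f
      dsimp at this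
      simp [← this]
  comm₂₃ := by
    dsimp [phiCplx]
    apply biprod.hom_ext'
    · simp [αp.naturality (ju.map f)]
    · have := γp.naturality f
      dsimp at this
      simp [this]

/-- `Φ` applied to a morphism. -/
noncomputable def phiMap
    (hw : ∀ M : 𝒜, αm.app (ju.obj M) ≫ αp.app (ju.obj M) = γm.app M ≫ γp.app M)
    {M M' : 𝒜} (f : M ⟶ M') :
    phiObj jl jp ju Xi αm αp γm γp hw M ⟶ phiObj jl jp ju Xi αm αp γm γp hw M' :=
  ShortComplex.homologyMap (phiCplxMap jl jp ju Xi αm αp γm γp hw f)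

/-!
A short exact sequence `0 → M' → M → M'' → 0` induces a short exact sequence of the
defining three-term complexes: the outer terms are images of it under the exact functors
`j_! j⁺` and `j_+ j⁺`, the middle one is the direct sum of its images under `Ξ j⁺` and the
identity. Since `α₋` is mono and `α₊` is epi, every one of these complexes has its homology
concentrated in the middle. Two applications of the snake lemma (to the rows of cycles, then to
the rows of homology) show that the middle homology of such a sequence of complexes is short
exact.
-/

open ZeroObject

namespace CategoryTheory.ShortComplex

variable {C : Type*} [Category C] [Abelian C]

lemma Exact.biprod_map {S₁ S₂ : ShortComplex C} (h₁ : S₁.Exact) (h₂ : S₂.Exact) :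
    (ShortComplex.mk (biprod.map S₁.f S₂.f) (biprod.map S₁.g S₂.g) (by ext <;> simp)).Exact := by
  rw [exact_iff_exact_up_to_refinements]
  intro A x hx
  obtain ⟨A₁, p₁, _, y₁, hy₁⟩ := h₁.exact_up_to_refinements (x ≫ biprod.fst)
    (by simpa using hx =≫ biprod.fst)
  obtain ⟨A₂, p₂, _, y₂, hy₂⟩ := h₂.exact_up_to_refinements (p₁ ≫ x ≫ biprod.snd)
    (by simpa using p₁ ≫= hx =≫ biprod.snd)
  refine ⟨A₂, p₂ ≫ p₁, epi_comp _ _, biprod.lift (p₂ ≫ y₁) y₂, ?_⟩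
  ext
  · simp [hy₁]
  · simpa using hy₂

lemma ShortExact.biprod_map {S₁ S₂ : ShortComplex C} (h₁ : S₁.ShortExact)
    (h₂ : S₂.ShortExact) :
    (ShortComplex.mk (biprod.map S₁.f S₂.f) (biprod.map S₁.g S₂.g)
      (by ext <;> simp)).ShortExact :=
  have := h₁.mono_f; have := h₂.mono_f; have := h₁.epi_g; have := h₂.epi_g
  .mk' (h₁.exact.biprod_map h₂.exact) inferInstance inferInstance

lemma mono_toCycles (S : ShortComplex C) [Mono S.f] : Mono S.toCycles :=
  mono_of_mono_fac S.toCycles_i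

@[simps]
noncomputable def homologyπNatTrans : cyclesFunctor C ⟶ homologyFunctor C where
  app S := S.homologyπ
  naturality _ _ φ := (homologyπ_naturality φ).symm

section

variable (T : ShortComplex (ShortComplex C))

noncomputable def cyclesSnakeInput (h₂ : (T.map π₂).ShortExact) (h₃ : (T.map π₃).ShortExact)
    [Epi T.X₁.g] [Epi T.X₂.g] [Epi T.X₃.g] : SnakeInput C where
  L₀ := T.map (cyclesFunctor C)
  L₁ := T.map π₂
  L₂ := T.map π₃
  L₃ := ShortComplex.mk (0 : (0 : C) ⟶ 0) 0 comp_zero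
  v₀₁ := T.mapNatTrans (iCyclesNatTrans C)
  v₁₂ := T.mapNatTrans π₂Toπ₃
  v₂₃ := 0
  w₀₂ := by ext <;> exact iCycles_g _
  w₁₃ := comp_zero
  h₀ := by
    apply isLimitOfIsLimitπ
    all_goals exact (KernelFork.isLimitMapConeEquiv _ _).symm (cyclesIsKernel _)
  h₃ := by
    apply isColimitOfIsColimitπ
    all_goals
      exact (CokernelCofork.isColimitMapCoconeEquiv _ _).symm
        (CokernelCofork.IsColimit.ofEpiOfIsZero _ (by assumption) (isZero_zero C))
  L₁_exact := h₂.exact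
  epi_L₁_g := h₂.epi_g
  L₂_exact := h₃.exact
  mono_L₂_f := h₃.mono_f

lemma shortExact_map_cyclesFunctor (h₂ : (T.map π₂).ShortExact) (h₃ : (T.map π₃).ShortExact)
    [Epi T.X₁.g] [Epi T.X₂.g] [Epi T.X₃.g] : (T.map (cyclesFunctor C)).ShortExact := by
  let K := cyclesSnakeInput T h₂ h₃
  have : Mono K.L₁.f := h₂.mono_f
  exact .mk' K.L₀_exact K.mono_L₀_f
    ((exact_iff_epi K.L₁' ((isZero_zero C).eq_of_tgt _ _)).1 K.L₁'_exact)

noncomputable def homologySnakeInput (h₁ : (T.map π₁).ShortExact)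
    (hcycles : (T.map (cyclesFunctor C)).ShortExact) [Mono T.X₁.f] [Mono T.X₂.f] [Mono T.X₃.f] :
    SnakeInput C where
  L₀ := ShortComplex.mk (0 : (0 : C) ⟶ 0) 0 comp_zero
  L₁ := T.map π₁
  L₂ := T.map (cyclesFunctor C)
  L₃ := T.map (homologyFunctor C)
  v₀₁ := 0
  v₁₂ := T.mapNatTrans (toCyclesNatTrans C)
  v₂₃ := T.mapNatTrans homologyπNatTrans
  w₀₂ := zero_comp
  w₁₃ := by ext <;> exact toCycles_comp_homologyπ _
  h₀ := by
    apply isLimitOfIsLimitπ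
    all_goals
      exact (KernelFork.isLimitMapConeEquiv _ _).symm
        (KernelFork.IsLimit.ofMonoOfIsZero _ (mono_toCycles _) (isZero_zero C))
  h₃ := by
    apply isColimitOfIsColimitπ
    all_goals exact (CokernelCofork.isColimitMapCoconeEquiv _ _).symm (homologyIsCokernel _)
  L₁_exact := h₁.exact
  epi_L₁_g := h₁.epi_g
  L₂_exact := hcycles.exact
  mono_L₂_f := hcycles.mono_f

lemma shortExact_map_homologyFunctor_of_cycles (h₁ : (T.map π₁).ShortExact)
    (hcycles : (T.map (cyclesFunctor C)).ShortExact) [Mono T.X₁.f] [Mono T.X₂.f] [Mono T.X₃.f] :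
    (T.map (homologyFunctor C)).ShortExact := by
  let K := homologySnakeInput T h₁ hcycles
  have : Epi K.L₂.g := hcycles.epi_g
  exact .mk' K.L₃_exact
    ((exact_iff_mono K.L₂' ((isZero_zero C).eq_of_src _ _)).1 K.L₂'_exact) K.epi_L₃_g

lemma shortExact_map_homologyFunctor (h₁ : (T.map π₁).ShortExact) (h₂ : (T.map π₂).ShortExact)
    (h₃ : (T.map π₃).ShortExact) [Mono T.X₁.f] [Mono T.X₂.f] [Mono T.X₃.f]
    [Epi T.X₁.g] [Epi T.X₂.g] [Epi T.X₃.g] : (T.map (homologyFunctor C)).ShortExact :=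
  shortExact_map_homologyFunctor_of_cycles T h₁ (shortExact_map_cyclesFunctor T h₂ h₃)

end

end CategoryTheory.ShortComplex

section

variable (hw : ∀ M : 𝒜, αm.app (ju.obj M) ≫ αp.app (ju.obj M) = γm.app M ≫ γp.app M)

omit [Abelian ℋ] in
lemma phiCplx_mono_f (hmono : ∀ X : ℋ, Mono (αm.app X)) (M : 𝒜) :
    Mono (phiCplx jl jp ju Xi αm αp γm γp hw M).f := by
  have := hmono (ju.obj M)
  exact (mono_of_mono_fac (biprod.lift_fst (αm.app (ju.obj M)) (γm.app M)) :)

omit [Abelian ℋ] in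
lemma phiCplx_epi_g (hepi : ∀ X : ℋ, Epi (αp.app X)) (M : 𝒜) :
    Epi (phiCplx jl jp ju Xi αm αp γm γp hw M).g := by
  have := hepi (ju.obj M)
  exact (epi_of_epi_fac (biprod.inl_desc (αp.app (ju.obj M)) (-γp.app M)) :)

lemma phiCplxMap_comp_eq_zero [ju.PreservesZeroMorphisms] [jl.PreservesZeroMorphisms]
    [Xi.PreservesZeroMorphisms] [jp.PreservesZeroMorphisms]
    {M₁ M₂ M₃ : 𝒜} {f : M₁ ⟶ M₂} {g : M₂ ⟶ M₃} (h : f ≫ g = 0) :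
    phiCplxMap jl jp ju Xi αm αp γm γp hw f ≫ phiCplxMap jl jp ju Xi αm αp γm γp hw g = 0 := by
  have hY : ju.map f ≫ ju.map g = 0 := by rw [← ju.map_comp, h, ju.map_zero]
  ext
  · exact (jl.map_comp _ _).symm.trans (by rw [hY, jl.map_zero]; rfl)
  · show biprod.map (Xi.map (ju.map f)) f ≫ biprod.map (Xi.map (ju.map g)) g = 0
    ext <;> simp [← Xi.map_comp, hY, h]
  · exact (jp.map_comp _ _).symm.trans (by rw [hY, jp.map_zero]; rfl)

noncomputable abbrev phiCplxShortComplex [ju.PreservesZeroMorphisms]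
    [jl.PreservesZeroMorphisms] [Xi.PreservesZeroMorphisms] [jp.PreservesZeroMorphisms]
    (S : ShortComplex 𝒜) : ShortComplex (ShortComplex 𝒜) :=
  ShortComplex.mk (phiCplxMap jl jp ju Xi αm αp γm γp hw S.f)
    (phiCplxMap jl jp ju Xi αm αp γm γp hw S.g)
    (phiCplxMap_comp_eq_zero jl jp ju Xi αm αp γm γp hw S.zero)

end

/-- The vanishing cycles functor `Φ` is exact: if the constituent functors are
exact, `α₋` is (pointwise) injective, `α₊` is (pointwise) surjective, and
`α₊ ∘ α₋ = γ₊ ∘ γ₋`, then `Φ` carries short exact sequences to short exact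
sequences. -/
theorem phi_exact
    [PreservesFiniteLimits jl] [PreservesFiniteColimits jl]
    [PreservesFiniteLimits jp] [PreservesFiniteColimits jp]
    [PreservesFiniteLimits ju] [PreservesFiniteColimits ju]
    [PreservesFiniteLimits Xi] [PreservesFiniteColimits Xi]
    (hmono : ∀ X : ℋ, Mono (αm.app X)) (hepi : ∀ X : ℋ, Epi (αp.app X))
    (hw : ∀ M : 𝒜, αm.app (ju.obj M) ≫ αp.app (ju.obj M) = γm.app M ≫ γp.app M)
    (S : ShortComplex 𝒜) (hS : S.ShortExact) :
    ∃ w : phiMap jl jp ju Xi αm αp γm γp hw S.f ≫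
        phiMap jl jp ju Xi αm αp γm γp hw S.g = 0,
      (ShortComplex.mk _ _ w).ShortExact := by
  have := phiCplx_mono_f jl jp ju Xi αm αp γm γp hw hmono
  have := phiCplx_epi_g jl jp ju Xi αm αp γm γp hw hepi
  have hSY := hS.map_of_exact ju
  exact ⟨_, ShortComplex.shortExact_map_homologyFunctor
    (phiCplxShortComplex jl jp ju Xi αm αp γm γp hw S) (hSY.map_of_exact jl)
    ((hSY.map_of_exact Xi).biprod_map hS) (hSY.map_of_exact jp)⟩
end
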